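/- q-Zeilberger certificate for Sylvester's identity: Let q, x be complex numbers with |q| < 1 and x q^j ≠ 1 for every integer j ≥ 1. For each integer k ≥ 0 define F_k(x) = (−1)^k q^{k(3k+1)/2} x^k (1 − x q^{2k+1}) / ((q;q)_k · (x q^{k+1};q)_∞), and for k ≥ 1 define H_k(x) = (−1)^{k+1} q^{k(3k+1)/2} x^k / ((q;q)_{k−1} · (x q^{k+1};q)_∞), with H_0(x) = 0. Then for every integer k ≥ 0, F_k(x) − F_k(xq) = H_{k+1}(x) − H_k(x). -/

import Mathlib

/-!
Writing `(x q^{k+1}; q)_∞ = (1 - x q^{k+1}) (x q^{k+2}; q)_∞` (valid since the product converges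
for `|q| < 1`) and `(q; q)_k = (q; q)_{k-1} (1 - q^k)`, all four terms become rational
multiples of `1 / ((q; q)_k (x q^{k+2}; q)_∞)` with the common extra denominator `1 - x q^{k+1}`.
Clearing it, both sides equal `1 - q^k + x q^{3k+2} - x^2 q^{4k+3}`, up to the common factor
`(-1)^k q^{k(3k+1)/2} x^k`.
-/

/-- The finite q-Pochhammer symbol `(a; q)_k = ∏_{i=0}^{k-1} (1 - a q^i)`. -/
noncomputable def qPoch (q a : ℂ) (k : ℕ) : ℂ := ∏ i ∈ Finset.range k, (1 - a * q ^ i)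

/-- The infinite q-Pochhammer symbol `(a; q)_∞ = ∏_{i=0}^{∞} (1 - a q^i)`. -/
noncomputable def qPochInf (q a : ℂ) : ℂ := ∏' i : ℕ, (1 - a * q ^ i)

/-- The summand `F_k(x)` of the Sylvester series. -/
noncomputable def F (q x : ℂ) (k : ℕ) : ℂ :=
  (-1) ^ k * q ^ (k * (3 * k + 1) / 2) * x ^ k * (1 - x * q ^ (2 * k + 1)) /
    (qPoch q q k * qPochInf q (x * q ^ (k + 1)))

/-- The certificate `H_k(x)`, with `H_0(x) = 0`. -/
noncomputable def H (q x : ℂ) (k : ℕ) : ℂ :=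
  if k = 0 then 0
  else (-1) ^ (k + 1) * q ^ (k * (3 * k + 1) / 2) * x ^ k /
    (qPoch q q (k - 1) * qPochInf q (x * q ^ (k + 1)))

lemma multipliable_one_sub_mul_pow {q : ℂ} (hq : ‖q‖ < 1) (a : ℂ) :
    Multipliable fun n : ℕ => 1 - a * q ^ n := by
  have hsum : Summable fun n : ℕ => -(a * q ^ n) :=
    ((summable_geometric_of_norm_lt_one hq).mul_left a).neg
  simpa only [sub_eq_add_neg] using Complex.multipliable_one_add_of_summable hsum

lemma qPochInf_eq_one_sub_mul {q : ℂ} (hq : ‖q‖ < 1) (a : ℂ) :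
    qPochInf q a = (1 - a) * qPochInf q (a * q) := by
  have htail : Multipliable fun n : ℕ => 1 - a * q ^ (n + 1) := by
    simpa only [pow_succ', mul_assoc] using multipliable_one_sub_mul_pow hq (a * q)
  rw [qPochInf, tprod_eq_zero_mul' (f := fun n : ℕ => 1 - a * q ^ n) htail, qPochInf]
  simp only [pow_zero, mul_one, pow_succ', mul_assoc]

lemma qPoch_succ (q a : ℂ) (k : ℕ) :
    qPoch q a (k + 1) = qPoch q a k * (1 - a * q ^ k) :=
  Finset.prod_range_succ _ _

lemma qPoch_self_ne_zero {q : ℂ} (hq : ‖q‖ < 1) (k : ℕ) : qPoch q q k ≠ 0 := by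
  refine Finset.prod_ne_zero_iff.mpr fun i _ h => ?_
  have hlt : ‖q * q ^ i‖ < 1 := by
    rw [← pow_succ']
    simpa [norm_pow] using pow_lt_one₀ (norm_nonneg q) hq i.succ_ne_zero
  rw [← sub_eq_zero.mp h, norm_one] at hlt
  exact hlt.false

lemma pentagonal_succ (k : ℕ) :
    (k + 1) * (3 * (k + 1) + 1) / 2 = k * (3 * k + 1) / 2 + (3 * k + 2) := by
  rw [show (k + 1) * (3 * (k + 1) + 1) = k * (3 * k + 1) + (3 * k + 2) * 2 by ring,
    Nat.add_mul_div_right _ _ two_pos]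

section Certificate

variable {q : ℂ} (x : ℂ) (k : ℕ)

lemma F_eq_div (hq : ‖q‖ < 1) :
    F q x k = (-1) ^ k * q ^ (k * (3 * k + 1) / 2) * x ^ k * (1 - x * q ^ (2 * k + 1)) /
      (qPoch q q k * (1 - x * q ^ (k + 1)) * qPochInf q (x * q ^ (k + 2))) := by
  rw [F, qPochInf_eq_one_sub_mul hq, mul_assoc x, ← pow_succ, mul_assoc (qPoch q q k)]

lemma F_mul_eq_div :
    F q (x * q) k = (-1) ^ k * q ^ (k * (3 * k + 1) / 2) * (x ^ k * q ^ k) *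
      (1 - x * q ^ (2 * k + 2)) / (qPoch q q k * qPochInf q (x * q ^ (k + 2))) := by
  rw [F, mul_pow, mul_assoc x, ← pow_succ', mul_assoc x, ← pow_succ']

lemma H_succ_eq_div :
    H q x (k + 1) = (-1) ^ k * q ^ (k * (3 * k + 1) / 2 + (3 * k + 2)) * x ^ (k + 1) /
      (qPoch q q k * qPochInf q (x * q ^ (k + 2))) := by
  rw [H, if_neg k.succ_ne_zero, pentagonal_succ, pow_succ (-1 : ℂ) (k + 1), pow_succ (-1 : ℂ) k,
    Nat.add_sub_cancel]
  ring

/- The factor `1 - q ^ k` makes the formula uniform in `k`: it vanishes at `k = 0`, where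
`H q x 0 = 0`, and cancels the last factor of `qPoch q q k` otherwise. -/
lemma H_eq_div (hq : ‖q‖ < 1) :
    H q x k = -(-1) ^ k * q ^ (k * (3 * k + 1) / 2) * x ^ k * (1 - q ^ k) /
      (qPoch q q k * (1 - x * q ^ (k + 1)) * qPochInf q (x * q ^ (k + 2))) := by
  rcases k with _ | k
  · simp [H]
  rw [H, if_neg k.succ_ne_zero, Nat.add_sub_cancel, qPoch_succ, qPochInf_eq_one_sub_mul hq,
    mul_assoc x, ← pow_succ]
  have hA := qPoch_self_ne_zero hq k
  have hlast : 1 - q * q ^ k ≠ 0 :=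
    right_ne_zero_of_mul (qPoch_succ q q k ▸ qPoch_self_ne_zero hq (k + 1))
  rw [← pow_succ'] at hlast ⊢
  field_simp
  ring

end Certificate

/-- q-Zeilberger certificate for Sylvester's identity. -/
theorem sylvester_certificate (q x : ℂ) (hq : ‖q‖ < 1)
    (hx : ∀ j : ℕ, 1 ≤ j → x * q ^ j ≠ 1) :
    ∀ k : ℕ, F q x k - F q (x * q) k = H q x (k + 1) - H q x k := by
  intro k
  rw [F_eq_div x k hq, F_mul_eq_div, H_succ_eq_div, H_eq_div x k hq]
  have hA := qPoch_self_ne_zero hq k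
  have hu : 1 - x * q ^ (k + 1) ≠ 0 := sub_ne_zero.mpr (hx (k + 1) k.succ_pos).symm
  rcases eq_or_ne (qPochInf q (x * q ^ (k + 2))) 0 with hP | hP
  · simp [hP] -- every term is then a junk quotient by `0`
  field_simp
  ring
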